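/- Let m ≥ 1, γ ≠ 0, and let n : ℝ → ℂ^{m×m} be measurable with, for a.e. ξ ∈ ℝ and a constant C₀ > 0: |n(ξ)| ≤ C₀ min{|ξ|², |ξ|^{−1}} and Re[n(ξ)a·conj(a)] ≥ C₀^{−1} min{|ξ|², |ξ|^{−1}}|a|² for all a ∈ ℂ^m. Let o₀ = diag(d₁,...,d_m) with all d_ℓ > 0, and set p(ξ) = n(ξ)* o₀ − 2πi γ ξ I ∈ ℂ^{m×m}. Then there exists C > 0, depending only on C₀, γ, and the d_ℓ, such that for a.e. ξ ∈ ℝ and all b ∈ ℂ^m: C^{−1} |p(ξ) b|² ≤ |ξ|² |b|² ≤ C |p(ξ) b|². -/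

import Mathlib

open scoped ComplexConjugate

/-- The Euclidean norm on `ℂ^m`. -/
noncomputable def cvecNorm {m : ℕ} (b : Fin m → ℂ) : ℝ :=
  Real.sqrt (∑ i, ‖b i‖ ^ 2)

/-- The one-dimensional, zero surface tension symbol `p(ξ) = N(ξ)* o₀ − 2πiγξ I`. -/
noncomputable def surfSymb1D {m : ℕ} (γ : ℝ) (dvec : Fin m → ℝ)
    (N : ℝ → Matrix (Fin m) (Fin m) ℂ) (ξ : ℝ) : Matrix (Fin m) (Fin m) ℂ :=
  (N ξ).conjTranspose * Matrix.diagonal (fun ℓ => ((dvec ℓ : ℝ) : ℂ))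
    - (((2 * Real.pi * γ * ξ : ℝ) : ℂ) * Complex.I) • 1

/-!
On `EuclideanSpace ℂ (Fin m)` the symbol is `A† D - i t` with `A = n(ξ)`, `D = o₀` self-adjoint
and invertible, and `t = 2πγξ`. The upper bound is the triangle inequality together with
`‖A‖ ≤ C₀ min{|ξ|², |ξ|⁻¹} ≤ C₀ |ξ|`. For the lower bound, the reverse triangle inequality gives
`|t| ‖b‖ ≤ ‖p b‖ + ‖A‖ ‖D‖ ‖b‖`, while pairing `p b` with `D b` kills the skew-adjoint term `-i t`,
so that `C₀⁻¹ min{…} ‖D b‖² ≤ Re ⟪p b, D b⟫ ≤ ‖p b‖ ‖D b‖`. As `‖A‖ ≤ C₀ min{…}` and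
`‖b‖ ≤ ‖D⁻¹‖ ‖D b‖`, the second estimate absorbs the error term of the first, so no splitting of
the frequencies into low, intermediate and high ones is needed.
-/

open scoped InnerProductSpace

section SkewShift

open Complex

variable {E : Type*} [NormedAddCommGroup E] [InnerProductSpace ℂ E] [CompleteSpace E]
  (A D : E →L[ℂ] E) (t : ℝ) (x : E)

theorem norm_star_comp_apply_le : ‖star A (D x)‖ ≤ ‖A‖ * ‖D‖ * ‖x‖ := by
  simpa only [norm_star, mul_assoc] using (star A).le_opNorm_of_le (D.le_opNorm x)

theorem norm_star_mul_sub_smul_apply_le :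
    ‖(star A * D - ((t : ℂ) * I) • 1) x‖ ≤ (‖A‖ * ‖D‖ + |t|) * ‖x‖ := by
  calc ‖(star A * D - ((t : ℂ) * I) • 1) x‖ = ‖star A (D x) - ((t : ℂ) * I) • x‖ := rfl
    _ ≤ ‖A‖ * ‖D‖ * ‖x‖ + |t| * ‖x‖ := by
        grw [norm_sub_le, norm_star_comp_apply_le, norm_smul]
        simp
    _ = (‖A‖ * ‖D‖ + |t|) * ‖x‖ := by ring

theorem sub_mul_norm_le_norm_star_mul_sub_smul_apply :
    (|t| - ‖A‖ * ‖D‖) * ‖x‖ ≤ ‖(star A * D - ((t : ℂ) * I) • 1) x‖ := by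
  calc (|t| - ‖A‖ * ‖D‖) * ‖x‖ ≤ ‖((t : ℂ) * I) • x‖ - ‖star A (D x)‖ := by
        grw [norm_star_comp_apply_le, norm_smul]
        simp [sub_mul]
    _ ≤ ‖star A (D x) - ((t : ℂ) * I) • x‖ := by
        rw [norm_sub_rev]
        exact norm_sub_norm_le _ _
    _ = ‖(star A * D - ((t : ℂ) * I) • 1) x‖ := rfl

theorem re_inner_star_mul_sub_smul_apply (hD : IsSelfAdjoint D) :
    re ⟪(star A * D - ((t : ℂ) * I) • 1) x, D x⟫_ℂ = re ⟪D x, A (D x)⟫_ℂ := by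
  have hreal : (⟪x, D x⟫_ℂ).im = 0 := hD.isSymmetric.im_inner_self_apply x
  simp [ContinuousLinearMap.star_eq_adjoint, ContinuousLinearMap.adjoint_inner_left, hreal]

theorem mul_norm_le_norm_star_mul_sub_smul_apply (hD : IsSelfAdjoint D) {k : ℝ}
    (hA : ∀ y, k * ‖y‖ ^ 2 ≤ re ⟪y, A y⟫_ℂ) :
    k * ‖D x‖ ≤ ‖(star A * D - ((t : ℂ) * I) • 1) x‖ := by
  have key : k * ‖D x‖ ^ 2 ≤ ‖(star A * D - ((t : ℂ) * I) • 1) x‖ * ‖D x‖ :=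
    calc k * ‖D x‖ ^ 2 ≤ re ⟪D x, A (D x)⟫_ℂ := hA (D x)
      _ = re ⟪(star A * D - ((t : ℂ) * I) • 1) x, D x⟫_ℂ :=
          (re_inner_star_mul_sub_smul_apply A D t x hD).symm
      _ ≤ _ := re_le_norm _ |>.trans (norm_inner_le_norm _ _)
  rcases (norm_nonneg (D x)).eq_or_lt with h | h
  · rw [← h, mul_zero]; exact norm_nonneg _
  · nlinarith

theorem abs_mul_norm_le_norm_star_mul_sub_smul_apply (hD : IsSelfAdjoint D)
    {D' : E →L[ℂ] E} (hD' : D' * D = 1) {C₀ M : ℝ} (hC₀ : 0 < C₀) (hAM : ‖A‖ ≤ C₀ * M)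
    (hA : ∀ y, C₀⁻¹ * M * ‖y‖ ^ 2 ≤ re ⟪y, A y⟫_ℂ) :
    |t| * ‖x‖ ≤ (1 + C₀ ^ 2 * ‖D‖ * ‖D'‖) * ‖(star A * D - ((t : ℂ) * I) • 1) x‖ := by
  set P := ‖(star A * D - ((t : ℂ) * I) • 1) x‖
  have hM : 0 ≤ M := nonneg_of_mul_nonneg_right ((norm_nonneg A).trans hAM) hC₀
  have hx : ‖x‖ ≤ ‖D'‖ * ‖D x‖ :=
    calc ‖x‖ = ‖D' (D x)‖ := congrArg norm (DFunLike.congr_fun hD' x).symm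
      _ ≤ ‖D'‖ * ‖D x‖ := D'.le_opNorm _
  have hDx : M * ‖D x‖ ≤ C₀ * P := by
    have := mul_norm_le_norm_star_mul_sub_smul_apply A D t x hD hA
    rwa [mul_assoc, inv_mul_le_iff₀ hC₀] at this
  calc |t| * ‖x‖ ≤ P + ‖A‖ * ‖D‖ * ‖x‖ := by
        linarith [sub_mul_norm_le_norm_star_mul_sub_smul_apply A D t x]
    _ ≤ P + C₀ * M * ‖D‖ * (‖D'‖ * ‖D x‖) := by grw [hAM, hx]
    _ = P + C₀ * ‖D‖ * ‖D'‖ * (M * ‖D x‖) := by ring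
    _ ≤ P + C₀ * ‖D‖ * ‖D'‖ * (C₀ * P) := by grw [hDx]
    _ = (1 + C₀ ^ 2 * ‖D‖ * ‖D'‖) * P := by ring

end SkewShift

open Matrix Complex

theorem cvecNorm_eq_norm_toLp {m : ℕ} (b : Fin m → ℂ) :
    cvecNorm b = ‖(WithLp.toLp 2 b : EuclideanSpace ℂ (Fin m))‖ :=
  (EuclideanSpace.norm_eq _).symm

theorem Matrix.sum_mulVec_mul_conj_eq_inner_toEuclideanCLM {𝕜 n : Type*} [RCLike 𝕜] [Fintype n]
    [DecidableEq n] (A : Matrix n n 𝕜) (a : n → 𝕜) :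
    ∑ i, (A *ᵥ a) i * conj (a i) =
      ⟪WithLp.toLp 2 a, toEuclideanCLM (n := n) (𝕜 := 𝕜) A (WithLp.toLp 2 a)⟫_𝕜 := by
  simp [PiLp.inner_apply]

theorem Matrix.toEuclideanCLM_diagonal_inv_mul_diagonal {𝕜 n : Type*} [RCLike 𝕜] [Fintype n]
    [DecidableEq n] {d : n → 𝕜} (hd : ∀ i, d i ≠ 0) :
    toEuclideanCLM (n := n) (𝕜 := 𝕜) (diagonal fun i => (d i)⁻¹) *
      toEuclideanCLM (n := n) (𝕜 := 𝕜) (diagonal d) = 1 := by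
  rw [← map_mul, diagonal_mul_diagonal, ← map_one (toEuclideanCLM (n := n) (𝕜 := 𝕜)),
    ← diagonal_one]
  congr! with i
  exact inv_mul_cancel₀ (hd i)

theorem toEuclideanCLM_surfSymb1D {m : ℕ} (γ : ℝ) (dvec : Fin m → ℝ)
    (N : ℝ → Matrix (Fin m) (Fin m) ℂ) (ξ : ℝ) :
    toEuclideanCLM (n := Fin m) (𝕜 := ℂ) (surfSymb1D γ dvec N ξ) =
      star (toEuclideanCLM (n := Fin m) (𝕜 := ℂ) (N ξ)) *
          toEuclideanCLM (n := Fin m) (𝕜 := ℂ) (diagonal fun ℓ => ((dvec ℓ : ℝ) : ℂ))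
        - (((2 * Real.pi * γ * ξ : ℝ) : ℂ) * I) • 1 := by
  rw [surfSymb1D, ← star_eq_conjTranspose, map_sub, map_mul, map_star, map_smul, map_one]

theorem min_sq_inv_le {x : ℝ} (hx : 0 ≤ x) : min (x ^ 2) x⁻¹ ≤ x := by
  rcases le_total x 1 with h | h
  · exact (min_le_left _ _).trans (by nlinarith)
  · exact (min_le_right _ _).trans ((inv_le_one_of_one_le₀ h).trans h)

theorem norm_toEuclideanCLM_le_of_cvecNorm {m : ℕ} {A : Matrix (Fin m) (Fin m) ℂ} {K : ℝ}
    (hK : 0 ≤ K) (h : ∀ b, cvecNorm (A *ᵥ b) ≤ K * cvecNorm b) :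
    ‖toEuclideanCLM (n := Fin m) (𝕜 := ℂ) A‖ ≤ K :=
  ContinuousLinearMap.opNorm_le_bound _ hK fun x => by
    simpa [cvecNorm_eq_norm_toLp, ← toEuclideanCLM_toLp] using h x.ofLp

theorem sq_le_max_mul_sq_of_le {s p a b c : ℝ} (ha : 0 < a) (hb : 0 < b) (hs : 0 ≤ s) (hp : 0 ≤ p)
    (hlow : a * s ≤ c * p) (hup : p ≤ b * s) :
    (max (b ^ 2) ((c / a) ^ 2))⁻¹ * p ^ 2 ≤ s ^ 2 ∧ s ^ 2 ≤ max (b ^ 2) ((c / a) ^ 2) * p ^ 2 := by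
  have hs' : s ≤ c / a * p := by rw [div_mul_eq_mul_div, le_div_iff₀ ha]; linarith
  constructor
  · rw [inv_mul_le_iff₀ (lt_max_of_lt_left (pow_pos hb 2))]
    calc p ^ 2 ≤ (b * s) ^ 2 := pow_le_pow_left₀ hp hup 2
      _ = b ^ 2 * s ^ 2 := mul_pow _ _ _
      _ ≤ _ := by gcongr; exact le_max_left _ _
  · calc s ^ 2 ≤ (c / a * p) ^ 2 := pow_le_pow_left₀ hs hs' 2
      _ = (c / a) ^ 2 * p ^ 2 := mul_pow _ _ _
      _ ≤ _ := by gcongr; exact le_max_right _ _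

theorem stmt_13_general (m : ℕ) (γ C₀ : ℝ) (hγ : γ ≠ 0) (hC₀ : 0 < C₀)
    (dvec : Fin m → ℝ) (hd : ∀ ℓ, 0 < dvec ℓ) :
    ∃ C : ℝ, 0 < C ∧
      ∀ (N : ℝ → Matrix (Fin m) (Fin m) ℂ) (ξ : ℝ),
        (∀ b : Fin m → ℂ,
          cvecNorm ((N ξ).mulVec b) ≤ C₀ * min (|ξ| ^ 2) |ξ|⁻¹ * cvecNorm b) →
        (∀ a : Fin m → ℂ,
          C₀⁻¹ * min (|ξ| ^ 2) |ξ|⁻¹ * cvecNorm a ^ 2 ≤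
            (∑ i, (N ξ).mulVec a i * conj (a i)).re) →
        ∀ b : Fin m → ℂ,
          C⁻¹ * cvecNorm ((surfSymb1D γ dvec N ξ).mulVec b) ^ 2 ≤ |ξ| ^ 2 * cvecNorm b ^ 2 ∧
            |ξ| ^ 2 * cvecNorm b ^ 2 ≤ C * cvecNorm ((surfSymb1D γ dvec N ξ).mulVec b) ^ 2 := by
  set D := toEuclideanCLM (n := Fin m) (𝕜 := ℂ) (diagonal fun ℓ => ((dvec ℓ : ℝ) : ℂ))
  set D' := toEuclideanCLM (n := Fin m) (𝕜 := ℂ) (diagonal fun ℓ => ((dvec ℓ : ℝ) : ℂ)⁻¹)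
  have hD : IsSelfAdjoint D :=
    (isHermitian_diagonal_iff.2 fun ℓ => conj_ofReal _).isSelfAdjoint.map _
  have hD' : D' * D = 1 :=
    toEuclideanCLM_diagonal_inv_mul_diagonal fun ℓ => ofReal_ne_zero.2 (hd ℓ).ne'
  have hπγ : 0 < 2 * Real.pi * |γ| := by positivity
  refine ⟨max ((C₀ * ‖D‖ + 2 * Real.pi * |γ|) ^ 2)
    (((1 + C₀ ^ 2 * ‖D‖ * ‖D'‖) / (2 * Real.pi * |γ|)) ^ 2), by positivity,
    fun N ξ hN hNcoer b => ?_⟩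
  set A := toEuclideanCLM (n := Fin m) (𝕜 := ℂ) (N ξ)
  set M := min (|ξ| ^ 2) |ξ|⁻¹
  have hA : ‖A‖ ≤ C₀ * M := norm_toEuclideanCLM_le_of_cvecNorm (by positivity) hN
  have hAcoer : ∀ y, C₀⁻¹ * M * ‖y‖ ^ 2 ≤ re ⟪y, A y⟫_ℂ := fun y => by
    simpa [cvecNorm_eq_norm_toLp, sum_mulVec_mul_conj_eq_inner_toEuclideanCLM] using hNcoer y.ofLp
  have ht : |2 * Real.pi * γ * ξ| = 2 * Real.pi * |γ| * |ξ| := by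
    simp [abs_mul, abs_of_pos Real.pi_pos]
  simp only [cvecNorm_eq_norm_toLp, ← toEuclideanCLM_toLp, toEuclideanCLM_surfSymb1D, ← mul_pow]
  refine sq_le_max_mul_sq_of_le hπγ (by positivity) (by positivity) (norm_nonneg _) ?_ ?_
  · have := abs_mul_norm_le_norm_star_mul_sub_smul_apply A D (2 * Real.pi * γ * ξ)
      (WithLp.toLp 2 b) hD hD' hC₀ hA hAcoer
    rwa [ht, mul_assoc] at this
  · calc _ ≤ (‖A‖ * ‖D‖ + |2 * Real.pi * γ * ξ|) * ‖WithLp.toLp 2 b‖ :=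
          norm_star_mul_sub_smul_apply_le _ _ _ _
      _ ≤ (C₀ * |ξ| * ‖D‖ + 2 * Real.pi * |γ| * |ξ|) * ‖WithLp.toLp 2 b‖ := by
          grw [hA, ht, show M ≤ |ξ| from min_sq_inv_le (abs_nonneg ξ)]
      _ = (C₀ * ‖D‖ + 2 * Real.pi * |γ|) * (|ξ| * ‖WithLp.toLp 2 b‖) := by ring

/-- One-dimensional (`n = 2`), zero-surface-tension version of the
invertibility estimate for the free-surface symbol: if `n : ℝ → ℂ^{m×m}` satisfies the
two-sided normal-stress-to-normal-Dirichlet bounds with constant `C₀`, `γ ≠ 0`, and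
`o₀ = diag(d₁,…,d_m)` with `d_ℓ > 0`, then `p(ξ) = n(ξ)* o₀ − 2πiγξ I` satisfies
`C⁻¹|p(ξ)b|² ≤ |ξ|²|b|² ≤ C|p(ξ)b|²` for a constant `C` depending only on `C₀`, `γ`
and the `d_ℓ`. -/
theorem stmt_13 (m : ℕ) (hm : 1 ≤ m) (γ C₀ : ℝ) (hγ : γ ≠ 0) (hC₀ : 0 < C₀)
    (dvec : Fin m → ℝ) (hd : ∀ ℓ, 0 < dvec ℓ) :
    ∃ C : ℝ, 0 < C ∧
      ∀ (N : ℝ → Matrix (Fin m) (Fin m) ℂ) (ξ : ℝ),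
        (∀ b : Fin m → ℂ,
          cvecNorm ((N ξ).mulVec b) ≤ C₀ * min (|ξ| ^ 2) |ξ|⁻¹ * cvecNorm b) →
        (∀ a : Fin m → ℂ,
          C₀⁻¹ * min (|ξ| ^ 2) |ξ|⁻¹ * cvecNorm a ^ 2 ≤
            (∑ i, (N ξ).mulVec a i * conj (a i)).re) →
        ∀ b : Fin m → ℂ,
          C⁻¹ * cvecNorm ((surfSymb1D γ dvec N ξ).mulVec b) ^ 2 ≤ |ξ| ^ 2 * cvecNorm b ^ 2 ∧
            |ξ| ^ 2 * cvecNorm b ^ 2 ≤ C * cvecNorm ((surfSymb1D γ dvec N ξ).mulVec b) ^ 2 :=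
  stmt_13_general m γ C₀ hγ hC₀ dvec hd
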